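/- arXiv:1102.4951 — 2 statements merged into one kernel-verified Lean document; each statement's English description precedes it below -/
import Mathlib

section
/- Let m ≥ k ≥ 5 be integers and let n satisfy C(m, k−2) − (m−k+1)·A(m, 4, k−3) ≤ n ≤ C(m, k−2). Then there exists an (n,N,k,m)-CBC with N = n(k−2) − 2·⌊(C(m, k−2) − n)/(m−k+1)⌋, in which every member of the collection is a (k−2)-subset or a (k−3)-subset of S, the (k−2)-subsets occurring are pairwise distinct, each (k−3)-subset occurs exactly twice, and distinct (k−3)-subsets occurring have symmetric difference of cardinality at least 4. -/
/-!
Fix a code `S` of `q = ⌊(C(m, k-2) - n) / (m - k + 1)⌋` words of weight `k - 3` and minimum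
distance 4 (possible since `q ≤ A(m, 4, k - 3)`). Two codewords have no common superset of size
`k - 2`, and each has `m - k + 3` of them, so at least `C(m, k-2) - q (m - k + 3) ≥ n - 2q` of the
`(k - 2)`-sets contain no codeword. Take `n - 2q` of those once and every codeword twice.

For Hall's condition it suffices that every `U` with `|U| < k` contains at most `|U|` members
(with multiplicity). Any two distinct members have a union of at least `k - 1` elements. So if
`|U| ≤ k - 2`, then `U` contains at most one member; if `|U| = k - 1`, the complements in `U` of
the members inside `U` are pairwise disjoint and have sizes 1 (once-used sets) and 2 (codewords,
used twice).
-/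

/-- `maxCW m d w` = `A(m, d, w)`: the maximum size of a family of pairwise distinct
`w`-element subsets of an `m`-element set whose pairwise symmetric differences have
cardinality at least `d` (the maximum number of codewords of a binary constant weight
code of length `m`, weight `w` and minimum distance `d`). -/
noncomputable def maxCW (m d w : ℕ) : ℕ :=
  sSup {s : ℕ | ∃ F : Finset (Finset (Fin m)), F.card = s ∧
    (∀ C ∈ F, C.card = w) ∧
    ∀ C ∈ F, ∀ D ∈ F, C ≠ D → d ≤ (symmDiff C D).card}

open Finset

section CodeCombinatorics

variable {α : Type*} [DecidableEq α]

def IsConstWeightCode (S : Finset (Finset α)) (w d : ℕ) : Prop :=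
  (∀ B ∈ S, #B = w) ∧ ∀ B ∈ S, ∀ D ∈ S, B ≠ D → d ≤ #(symmDiff B D)

lemma IsConstWeightCode.mono {S S' : Finset (Finset α)} {w d : ℕ}
    (hS : IsConstWeightCode S w d) (h : S' ⊆ S) : IsConstWeightCode S' w d :=
  ⟨fun B hB => hS.1 B (h hB), fun B hB D hD => hS.2 B (h hB) D (h hD)⟩

lemma two_mul_card_union (s t : Finset α) : 2 * #(s ∪ t) = #s + #t + #(symmDiff s t) := by
  have hsd : #(symmDiff s t) = #(s ∪ t) - #(s ∩ t) := by
    rw [symmDiff_eq_sup_sdiff_inf, sup_eq_union, inf_eq_inter,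
      card_sdiff_of_subset inter_subset_union]
  have := card_le_card (inter_subset_union (s := s) (t := t))
  have := card_union_add_card_inter s t
  omega

lemma IsConstWeightCode.add_two_le_card_union {S : Finset (Finset α)} {w : ℕ}
    (hS : IsConstWeightCode S w 4) {B D : Finset α} (hB : B ∈ S) (hD : D ∈ S) (hBD : B ≠ D) :
    w + 2 ≤ #(B ∪ D) := by
  have := two_mul_card_union B D
  have := hS.1 B hB
  have := hS.1 D hD
  have := hS.2 B hB D hD hBD
  omega

end CodeCombinatorics

lemma exists_isConstWeightCode_card_eq_maxCW (m d w : ℕ) :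
    ∃ F : Finset (Finset (Fin m)), #F = maxCW m d w ∧ IsConstWeightCode F w d := by
  refine Nat.sSup_mem
    (s := {s | ∃ F : Finset (Finset (Fin m)), #F = s ∧ IsConstWeightCode F w d})
    ⟨0, ∅, rfl, by simp [IsConstWeightCode]⟩ ⟨Fintype.card (Finset (Fin m)), ?_⟩
  rintro s ⟨F, rfl, -⟩
  exact card_le_univ F

section Supersets

variable {α : Type*} [DecidableEq α] [Fintype α]

lemma card_filter_superset_powersetCard (B : Finset α) :
    #{T ∈ powersetCard (#B + 1) (univ : Finset α) | B ⊆ T} = Fintype.card α - #B := by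
  have hsup :
      {T ∈ powersetCard (#B + 1) (univ : Finset α) | B ⊆ T} = Bᶜ.image (insert · B) := by
    ext T
    simp only [mem_filter, mem_powersetCard, subset_univ, true_and, mem_image, mem_compl]
    rw [exists_eq_insert_iff, and_comm, eq_comm]
  rw [hsup, card_image_of_injOn fun a ha b hb hab => (insert_inj (mem_compl.1 ha)).1 hab,
    card_compl]

lemma IsConstWeightCode.card_filter_forall_not_subset_add {S : Finset (Finset α)} {w : ℕ}
    (hS : IsConstWeightCode S w 4) :
    #{T ∈ powersetCard (w + 1) univ | ∀ B ∈ S, ¬ B ⊆ T} + #S * (Fintype.card α - w)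
      = (Fintype.card α).choose (w + 1) := by
  set P := powersetCard (w + 1) (univ : Finset α)
  have hbad : {T ∈ P | ¬ ∀ B ∈ S, ¬ B ⊆ T} = S.biUnion fun B => {T ∈ P | B ⊆ T} := by
    ext T
    simp only [mem_filter, mem_biUnion, not_forall, not_not, exists_prop]
    tauto
  -- a common superset of size `w + 1` would contain `B ∪ D`, which has at least `w + 2` elements
  have hdisj : (S : Set (Finset α)).PairwiseDisjoint fun B => {T ∈ P | B ⊆ T} := by
    intro B hB D hD hBD
    refine disjoint_left.2 fun T hTB hTD => ?_
    rw [mem_filter, mem_powersetCard] at hTB hTD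
    have := card_le_card (union_subset hTB.2 hTD.2)
    have := hS.add_two_le_card_union hB hD hBD
    omega
  have hsupers : ∀ B ∈ S, #{T ∈ P | B ⊆ T} = Fintype.card α - w := fun B hB => by
    simpa only [hS.1 B hB] using card_filter_superset_powersetCard B
  have hsplit := card_filter_add_card_filter_not (s := P) fun T => ∀ B ∈ S, ¬ B ⊆ T
  rwa [hbad, card_biUnion hdisj, sum_const_nat hsupers, card_powersetCard, card_univ] at hsplit

end Supersets

section Hall

variable {α : Type*} [DecidableEq α]

lemma card_le_card_biUnion_of_card_filter_subset_le {ι : Type*} [Fintype ι]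
    (X : ι → Finset α) {k : ℕ} (hX : ∀ U : Finset α, #U < k → #{i | X i ⊆ U} ≤ #U)
    {J : Finset ι} (hJ : #J ≤ k) : #J ≤ #(J.biUnion X) := by
  by_cases hU : k ≤ #(J.biUnion X)
  · exact hJ.trans hU
  · calc #J ≤ #{i | X i ⊆ J.biUnion X} :=
          card_le_card fun i hi => mem_filter.2 ⟨mem_univ i, subset_biUnion_of_mem X hi⟩
      _ ≤ #(J.biUnion X) := hX _ (not_le.1 hU)

lemma sum_card_sdiff_le_card {U : Finset α} {F : Finset (Finset α)}
    (hunion : ∀ X ∈ F, ∀ Y ∈ F, X ≠ Y → X ∪ Y = U) :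
    ∑ X ∈ F, #(U \ X) ≤ #U := by
  have hdisj : (F : Set (Finset α)).PairwiseDisjoint (U \ ·) := by
    intro X hX Y hY hXY
    refine disjoint_left.2 fun x hxX hxY => ?_
    rw [mem_sdiff] at hxX hxY
    rw [← hunion X hX Y hY hXY, mem_union] at hxX
    tauto
  rw [← card_biUnion hdisj]
  exact card_le_card (biUnion_subset.2 fun X _ => sdiff_subset)

variable {w : ℕ} {G S : Finset (Finset α)}

lemma add_two_le_card_union_of_mem_union (hS : IsConstWeightCode S w 4)
    (hGw : ∀ T ∈ G, #T = w + 1) (hGS : ∀ T ∈ G, ∀ B ∈ S, ¬ B ⊆ T)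
    {X Y : Finset α} (hX : X ∈ G ∪ S) (hY : Y ∈ G ∪ S) (hXY : X ≠ Y) :
    w + 2 ≤ #(X ∪ Y) := by
  have grow : ∀ {T Z : Finset α}, T ∈ G → ¬ Z ⊆ T → w + 2 ≤ #(T ∪ Z) := by
    intro T Z hT hZ
    have := card_lt_card (left_lt_sup.2 hZ)
    rw [hGw _ hT] at this
    exact this
  rw [mem_union] at hX hY
  rcases hX with hX | hX <;> rcases hY with hY | hY
  · refine grow hX fun hYX => hXY (eq_of_subset_of_card_le hYX ?_).symm
    rw [hGw X hX, hGw Y hY]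
  · exact grow hX (hGS X hX Y hY)
  · rw [union_comm]
    exact grow hY (hGS Y hY X hX)
  · exact hS.add_two_le_card_union hX hY hXY

lemma card_filter_subset_add_two_mul_le (hw : 2 ≤ w) (hS : IsConstWeightCode S w 4)
    (hGw : ∀ T ∈ G, #T = w + 1) (hGS : ∀ T ∈ G, ∀ B ∈ S, ¬ B ⊆ T)
    {U : Finset α} (hU : #U ≤ w + 2) :
    #{T ∈ G | T ⊆ U} + 2 * #{B ∈ S | B ⊆ U} ≤ #U := by
  set G' := {T ∈ G | T ⊆ U}
  set S' := {B ∈ S | B ⊆ U}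
  have hdisj : Disjoint G' S' := disjoint_left.2 fun T hT hT' => by
    have := hGw T (mem_filter.1 hT).1
    have := hS.1 T (mem_filter.1 hT').1
    omega
  have hpair : ∀ X ∈ G' ∪ S', ∀ Y ∈ G' ∪ S', X ≠ Y → w + 2 ≤ #(X ∪ Y) := by
    intro X hX Y hY
    rw [← filter_union] at hX hY
    exact add_two_le_card_union_of_mem_union hS hGw hGS (mem_filter.1 hX).1
      (mem_filter.1 hY).1
  have hsubU : ∀ X ∈ G' ∪ S', X ⊆ U := by
    intro X hX
    rw [← filter_union] at hX
    exact (mem_filter.1 hX).2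
  rcases hU.lt_or_eq with hU | hU
  · -- no two members fit together in `U`
    have hle : #(G' ∪ S') ≤ 1 := card_le_one.2 fun X hX Y hY => by
      by_contra hXY
      have := card_le_card (union_subset (hsubU X hX) (hsubU Y hY))
      have := hpair X hX Y hY hXY
      omega
    have hG' : 0 < #G' → w + 1 ≤ #U := fun h => by
      obtain ⟨T, hT⟩ := card_pos.1 h
      exact hGw T (mem_filter.1 hT).1 ▸ card_le_card (mem_filter.1 hT).2
    have hS' : 0 < #S' → w ≤ #U := fun h => by
      obtain ⟨B, hB⟩ := card_pos.1 h
      exact hS.1 B (mem_filter.1 hB).1 ▸ card_le_card (mem_filter.1 hB).2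
    rw [card_union_of_disjoint hdisj] at hle
    omega
  · -- the complements in `U` are pairwise disjoint, of size 1 on `G'` and 2 on `S'`
    calc #G' + 2 * #S' = ∑ X ∈ G' ∪ S', #(U \ X) := by
          rw [sum_union hdisj, sum_const_nat (m := 1), sum_const_nat (m := 2)]
          · ring
          · intro B hB
            rw [card_sdiff_of_subset (mem_filter.1 hB).2, hU, hS.1 B (mem_filter.1 hB).1]
            omega
          · intro T hT
            rw [card_sdiff_of_subset (mem_filter.1 hT).2, hU, hGw T (mem_filter.1 hT).1]
            omega
      _ ≤ #U := sum_card_sdiff_le_card fun X hX Y hY hXY =>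
          eq_of_subset_of_card_le (union_subset (hsubU X hX) (hsubU Y hY))
            (hU ▸ hpair X hX Y hY hXY)

end Hall

section Enumeration

variable {α ι : Type*} [Fintype ι]

def EnumeratesOnceTwice (G S : Finset (Finset α)) (X : ι → Finset α) : Prop :=
  ∀ f : Finset α → ℕ, ∑ i, f (X i) = ∑ T ∈ G, f T + 2 * ∑ B ∈ S, f B

lemma exists_enumeratesOnceTwice (G S : Finset (Finset α)) {n : ℕ} (hn : #G + 2 * #S = n) :
    ∃ X : Fin n → Finset α, EnumeratesOnceTwice G S X := by
  let e : Fin n ≃ G ⊕ S ⊕ S := (Fintype.equivFinOfCardEq (by simp [← hn, two_mul])).symm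
  let v : G ⊕ S ⊕ S → Finset α := Sum.elim Subtype.val (Sum.elim Subtype.val Subtype.val)
  refine ⟨v ∘ e, fun f => (e.sum_comp (f ∘ v)).trans ?_⟩
  simp [v, Fintype.sum_sum_type, sum_attach, two_mul]

variable {G S : Finset (Finset α)} {X : ι → Finset α}

lemma EnumeratesOnceTwice.card_filter (hX : EnumeratesOnceTwice G S X) (p : Finset α → Prop)
    [DecidablePred p] : #{i | p (X i)} = #{T ∈ G | p T} + 2 * #{B ∈ S | p B} := by
  simpa only [Finset.card_filter] using hX fun T => if p T then 1 else 0

lemma EnumeratesOnceTwice.mem_or_mem (hX : EnumeratesOnceTwice G S X) (i : ι) :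
    X i ∈ G ∨ X i ∈ S := by
  classical
  by_contra hi
  have hcount := hX.card_filter fun T => ¬ (T ∈ G ∨ T ∈ S)
  rw [filter_false_of_mem fun T hT => not_not.2 (Or.inl hT),
    filter_false_of_mem fun T hT => not_not.2 (Or.inr hT), card_empty] at hcount
  exact card_ne_zero_of_mem (mem_filter.2 ⟨mem_univ i, hi⟩) hcount

lemma EnumeratesOnceTwice.sum_card {w : ℕ} (hX : EnumeratesOnceTwice G S X)
    (hSw : ∀ B ∈ S, #B = w) (hGw : ∀ T ∈ G, #T = w + 1) :
    ∑ i, #(X i) = #G * (w + 1) + 2 * (#S * w) := by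
  rw [hX, sum_const_nat hGw, sum_const_nat hSw]

variable [DecidableEq α]

lemma EnumeratesOnceTwice.ne_of_notMem (hX : EnumeratesOnceTwice G S X) {i j : ι}
    (hij : i ≠ j) (hi : X i ∉ S) : X i ≠ X j := by
  intro hXij
  have htwo : 1 < #{l | X l = X i} :=
    one_lt_card.2
      ⟨i, mem_filter.2 ⟨mem_univ i, rfl⟩, j, mem_filter.2 ⟨mem_univ j, hXij.symm⟩, hij⟩
  have hG : #{T ∈ G | T = X i} ≤ 1 :=
    card_le_one.2 fun a ha b hb => (mem_filter.1 ha).2.trans (mem_filter.1 hb).2.symm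
  have hS : {B ∈ S | B = X i} = ∅ := filter_false_of_mem fun B hB hBi => hi (hBi ▸ hB)
  rw [hX.card_filter (· = X i), hS, card_empty] at htwo
  omega

lemma EnumeratesOnceTwice.card_filter_eq_two (hX : EnumeratesOnceTwice G S X) {i : ι}
    (hG : X i ∉ G) (hS : X i ∈ S) : #{j | X j = X i} = 2 := by
  rw [hX.card_filter (· = X i), filter_eq', filter_eq', if_neg hG, if_pos hS, card_empty,
    card_singleton]

lemma EnumeratesOnceTwice.card_le_card_biUnion {w : ℕ} (hX : EnumeratesOnceTwice G S X)
    (hw : 2 ≤ w) (hS : IsConstWeightCode S w 4) (hGw : ∀ T ∈ G, #T = w + 1)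
    (hGS : ∀ T ∈ G, ∀ B ∈ S, ¬ B ⊆ T) {J : Finset ι} (hJ : #J ≤ w + 3) :
    #J ≤ #(J.biUnion X) :=
  card_le_card_biUnion_of_card_filter_subset_le X
    (fun U hU => (hX.card_filter (· ⊆ U)).trans_le
      (card_filter_subset_add_two_mul_le hw hS hGw hGS (by omega))) hJ

end Enumeration

lemma exists_code_and_avoiding_sets {m w n : ℕ} (hwm : w + 3 ≤ m)
    (hn1 : m.choose (w + 1) - (m - (w + 3) + 1) * maxCW m 4 w ≤ n)
    (hn2 : n ≤ m.choose (w + 1)) :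
    ∃ S G : Finset (Finset (Fin m)), IsConstWeightCode S w 4 ∧ (∀ T ∈ G, #T = w + 1) ∧
      (∀ T ∈ G, ∀ B ∈ S, ¬ B ⊆ T) ∧ #S = (m.choose (w + 1) - n) / (m - (w + 3) + 1) ∧
      #G + 2 * #S = n := by
  set c := m - (w + 3) + 1
  set q := (m.choose (w + 1) - n) / c
  have hcw : m - w = c + 2 := by omega
  obtain ⟨F, hFcard, hF⟩ := exists_isConstWeightCode_card_eq_maxCW m 4 w
  have hFpack := hF.card_filter_forall_not_subset_add
  rw [Fintype.card_fin, hFcard, hcw, mul_add, mul_comm _ c] at hFpack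
  have hqF : q ≤ #F := Nat.div_le_of_le_mul (by rw [hFcard]; omega)
  obtain ⟨S, hSF, hScard⟩ := exists_subset_card_eq hqF
  have hS := hF.mono hSF
  have hSpack := hS.card_filter_forall_not_subset_add
  rw [Fintype.card_fin, hScard, hcw, mul_add, mul_comm q c] at hSpack
  have hqc : c * q ≤ m.choose (w + 1) - n := Nat.mul_div_le _ _
  obtain ⟨G, hGsub, hGcard⟩ :=
    exists_subset_card_eq (s := {T ∈ powersetCard (w + 1) univ | ∀ B ∈ S, ¬ B ⊆ T})
      (n := n - 2 * q) (by omega)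
  refine ⟨S, G, hS, fun T hT => (mem_powersetCard.1 (mem_filter.1 (hGsub hT)).1).2,
    fun T hT => (mem_filter.1 (hGsub hT)).2, hScard, ?_⟩
  -- `2 * q ≤ n`: packing all of `F` gives `2 * #F ≤ C(m, w+1) - c * #F ≤ n`
  omega

/-- Construction via binary constant weight codes, for `m ≥ k ≥ 5` and
`C(m,k-2) - (m-k+1)·A(m,4,k-3) ≤ n ≤ C(m,k-2)`: there is an (n,N,k,m)-CBC with
`N = n(k-2) - 2⌊(C(m,k-2) - n)/(m-k+1)⌋` whose members are pairwise distinct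
(k-2)-subsets together with (k-3)-subsets, each occurring exactly twice, that are
pairwise at symmetric-difference distance at least 4. -/
theorem cbc_construction_cw (n k m : ℕ) (hk : 5 ≤ k) (hkm : k ≤ m)
    (hn1 : Nat.choose m (k - 2) - (m - k + 1) * maxCW m 4 (k - 3) ≤ n)
    (hn2 : n ≤ Nat.choose m (k - 2)) :
    ∃ X : Fin n → Finset (Fin m),
      (∀ J : Finset (Fin n), 1 ≤ J.card → J.card ≤ k →
          J.card ≤ (J.biUnion X).card) ∧
      ((∑ t, (X t).card : ℤ) = (n : ℤ) * (k - 2)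
          - 2 * ⌊((Nat.choose m (k - 2) : ℚ) - n) / ((m : ℚ) - k + 1)⌋) ∧
      (∀ t, (X t).card = k - 2 ∨ (X t).card = k - 3) ∧
      (∀ t s, t ≠ s → (X t).card = k - 2 → (X s).card = k - 2 → X t ≠ X s) ∧
      (∀ t, (X t).card = k - 3 →
          (Finset.univ.filter (fun s => X s = X t)).card = 2) ∧
      (∀ t s, (X t).card = k - 3 → (X s).card = k - 3 → X t ≠ X s →
          4 ≤ (symmDiff (X t) (X s)).card) := by
  obtain ⟨w, rfl⟩ : ∃ w, k = w + 3 := ⟨k - 3, by omega⟩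
  simp only [show w + 3 - 2 = w + 1 by omega, show w + 3 - 3 = w by omega] at hn1 hn2 ⊢
  obtain ⟨S, G, hS, hGw, hGS, hScard, hn⟩ := exists_code_and_avoiding_sets hkm hn1 hn2
  obtain ⟨X, hX⟩ := exists_enumeratesOnceTwice G S hn
  have hmem : ∀ t, #(X t) = w → X t ∈ S := fun t ht =>
    (hX.mem_or_mem t).resolve_left fun hG => by have := hGw _ hG; omega
  have hnotmem : ∀ t, #(X t) = w + 1 → X t ∉ S := fun t ht hS' => by
    have := hS.1 _ hS'; omega
  have hfloor : ⌊((m.choose (w + 1) : ℚ) - n) / ((m : ℚ) - ↑(w + 3) + 1)⌋ = #S := by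
    rw [hScard, ← Nat.cast_sub hn2, ← Nat.cast_sub hkm, ← Nat.cast_succ,
      Rat.floor_natCast_div_natCast]
    norm_cast
  refine ⟨X, fun J _ hJ => hX.card_le_card_biUnion (by omega) hS hGw hGS hJ, ?_,
    fun t => (hX.mem_or_mem t).imp (hGw _) (hS.1 _),
    fun t s hts ht _ => hX.ne_of_notMem hts (hnotmem t ht),
    fun t ht => hX.card_filter_eq_two (fun hG => by have := hGw _ hG; omega) (hmem t ht),
    fun t s ht hs hts => hS.2 _ (hmem t ht) _ (hmem s hs) hts⟩
  rw [← Nat.cast_sum, hX.sum_card hS.1 hGw, hfloor, ← hn]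
  push_cast
  ring
end

section
/- Let k and n be integers with 1 ≤ k ≤ n. Then N(n, k, k) = kn − k(k−1), i.e. the minimum total storage of an (n, N, k, k)-combinatorial batch code equals kn − k(k−1). -/
/-!
If an item `s` of a `k`-item code lay in at most `n - k` of the `n` sets, some `k` sets would
avoid `s`, and their union, which misses `s`, would have fewer than `k` elements. So every item
is stored at least `n - k + 1` times and `N ≥ k (n - k + 1) = kn - k(k-1)`. Equality holds for
the code whose first `k` sets are the distinct singletons and whose other `n - k` sets are full.
-/

/-- `Nmin n k m`: minimum total storage over all (n,N,k,m)-combinatorial batch codes. -/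
noncomputable def Nmin (n k m : ℕ) : ℕ :=
  sInf {N : ℕ | ∃ X : Fin n → Finset (Fin m),
    (∑ t, (X t).card) = N ∧
    ∀ J : Finset (Fin n), 1 ≤ J.card → J.card ≤ k → J.card ≤ (J.biUnion X).card}

open Finset

def IsBatchCode {ι α : Type*} [DecidableEq α] (X : ι → Finset α) (k : ℕ) : Prop :=
  ∀ J : Finset ι, 1 ≤ #J → #J ≤ k → #J ≤ #(J.biUnion X)

namespace IsBatchCode

variable {ι α : Type*} [Fintype ι] [Fintype α] [DecidableEq α] {X : ι → Finset α} {k : ℕ}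

theorem card_lt_card_filter_mem_add (hX : IsBatchCode X k) (hk : Fintype.card α ≤ k) (s : α) :
    Fintype.card ι < #{t | s ∈ X t} + k := by
  by_contra! hfew
  have hmiss : k ≤ #{t | s ∉ X t} := by
    have := card_filter_add_card_filter_not (s := univ) (fun t => s ∈ X t)
    rw [card_univ] at this
    omega
  obtain ⟨J, hJ, hJk⟩ := exists_subset_card_eq hmiss
  have hunion : J.biUnion X ⊆ univ.erase s := by
    intro x hx
    obtain ⟨t, ht, hxt⟩ := mem_biUnion.mp hx
    exact mem_erase.mpr ⟨fun hxs => (mem_filter.mp (hJ ht)).2 (hxs ▸ hxt), mem_univ x⟩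
  have hα : 0 < Fintype.card α := Fintype.card_pos_iff.mpr ⟨s⟩
  have hsmall := card_le_card hunion
  rw [card_erase_of_mem (mem_univ s), card_univ] at hsmall
  have := hX J (by omega) hJk.le
  omega

theorem card_mul_le_sum_card_add (hX : IsBatchCode X k) (hk : Fintype.card α ≤ k) :
    Fintype.card α * (Fintype.card ι + 1) ≤ ∑ t, #(X t) + Fintype.card α * k := by
  have hcount : ∑ t, #(X t) = ∑ s, #{t | s ∈ X t} := by
    convert sum_card_bipartiteAbove_eq_sum_card_bipartiteBelow (fun t s => s ∈ X t)
      (s := univ) (t := univ) using 3 with t <;> ext <;> simp [bipartiteAbove, bipartiteBelow]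
  calc Fintype.card α * (Fintype.card ι + 1)
      ≤ ∑ s, (#{t | s ∈ X t} + k) := by
        simpa using card_nsmul_le_sum univ _ (Fintype.card ι + 1) fun s _ =>
          hX.card_lt_card_filter_mem_add hk s
    _ = ∑ t, #(X t) + Fintype.card α * k := by simp [sum_add_distrib, hcount]

end IsBatchCode

def singletonOrUniv (n m : ℕ) (t : Fin n) : Finset (Fin m) :=
  if h : (t : ℕ) < m then {⟨t, h⟩} else univ

theorem isBatchCode_singletonOrUniv (n m : ℕ) : IsBatchCode (singletonOrUniv n m) m := by
  intro J _ hJm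
  by_cases hsmall : ∀ t ∈ J, (t : ℕ) < m
  · calc #J = #(J.map Fin.valEmbedding) := (card_map _).symm
      _ ≤ #((J.biUnion (singletonOrUniv n m)).map Fin.valEmbedding) := by
        refine card_le_card fun x hx => ?_
        obtain ⟨t, ht, rfl⟩ := mem_map.mp hx
        refine mem_map.mpr ⟨⟨t, hsmall t ht⟩, mem_biUnion.mpr ⟨t, ht, ?_⟩, rfl⟩
        simp [singletonOrUniv, hsmall t ht]
      _ = _ := card_map _
  · push Not at hsmall
    obtain ⟨t, ht, hmt⟩ := hsmall
    have : singletonOrUniv n m t = univ := dif_neg (not_lt.mpr hmt)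
    calc #J ≤ m := hJm
      _ = #(singletonOrUniv n m t) := by simp [this]
      _ ≤ _ := card_le_card (subset_biUnion_of_mem _ ht)

theorem sum_card_singletonOrUniv (m d : ℕ) :
    ∑ t, #(singletonOrUniv (m + d) m t) = m * (d + 1) := by
  unfold singletonOrUniv
  rw [Fin.sum_univ_eq_sum_range (fun i => #(if h : i < m then {(⟨i, h⟩ : Fin m)} else univ)),
    sum_range_add]
  have hlow : ∀ i ∈ range m, #(if h : i < m then {(⟨i, h⟩ : Fin m)} else univ) = 1 := by
    intro i hi; simp [mem_range.mp hi]
  have hhigh : ∀ i ∈ range d, #(if h : m + i < m then {(⟨m + i, h⟩ : Fin m)} else univ) = m := by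
    intro i _; simp
  rw [sum_congr rfl hlow, sum_congr rfl hhigh]
  simp only [sum_const, card_range, smul_eq_mul]
  ring

theorem Nmin_eq_sInf_isBatchCode (n k m : ℕ) : Nmin n k m =
    sInf {N | ∃ X : Fin n → Finset (Fin m), ∑ t, #(X t) = N ∧ IsBatchCode X k} := rfl

theorem Nmin_m_eq_k_general (n k : ℕ) (hkn : k ≤ n) :
    Nmin n k k = k * n - k * (k - 1) := by
  obtain ⟨d, rfl⟩ := Nat.exists_eq_add_of_le hkn
  have hformula : k * (k + d) - k * (k - 1) = k * (d + 1) := by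
    rcases k with _ | j
    · simp
    · exact Nat.sub_eq_of_eq_add (by simp only [Nat.add_sub_cancel]; ring)
  rw [Nmin_eq_sInf_isBatchCode, hformula]
  have hmem : k * (d + 1) ∈ {N | ∃ X : Fin (k + d) → Finset (Fin k),
      ∑ t, #(X t) = N ∧ IsBatchCode X k} :=
    ⟨_, sum_card_singletonOrUniv k d, isBatchCode_singletonOrUniv _ k⟩
  refine le_antisymm (Nat.sInf_le hmem) ?_
  obtain ⟨X, hsum, hX⟩ := Nat.sInf_mem ⟨_, hmem⟩
  have := hX.card_mul_le_sum_card_add (by simp)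
  simp only [Fintype.card_fin] at this
  rw [← hsum]
  linarith

/-- For `1 ≤ k ≤ n`, the minimum total storage of an (n, N, k, k)-CBC is
`N(n,k,k) = kn - k(k-1)`. -/
theorem Nmin_m_eq_k (n k : ℕ) (hk : 1 ≤ k) (hkn : k ≤ n) :
    Nmin n k k = k * n - k * (k - 1) :=
  Nmin_m_eq_k_general n k hkn
end
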